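/- For every b > 0 one has F(b) < 1/b; equivalently, φ(b)/Φ(−b) < b + 1/b for all b > 0. -/

import Mathlib

open MeasureTheory Filter

/-- Standard normal density. -/
noncomputable def phi (x : ℝ) : ℝ := Real.exp (-x ^ 2 / 2) / Real.sqrt (2 * Real.pi)

/-- Standard normal cumulative distribution function. -/
noncomputable def Phi (x : ℝ) : ℝ := ∫ t in Set.Iio x, phi t

/-- Mills-type ratio. -/
noncomputable def r (b : ℝ) : ℝ := phi b / Phi (-b)

/-- The deficit transformation `F`. -/
noncomputable def F (b : ℝ) : ℝ := phi b / Phi (-b) - b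

/-!
Gordon's lower bound `x / (1 + x²) · φ(x) < ∫ₓ^∞ φ` gives the claim after multiplying by
`b + 1/b = (1 + b²) / b`. The bound holds because `g(x) = x / (1 + x²) · φ(x)` vanishes at
infinity and `φ + g' = 2 / (1 + x²)² · φ` is positive, so
`∫ₓ^∞ φ - g(x) = ∫ₓ^∞ (φ + g')` is positive.
-/

open Topology Set

lemma phi_pos (x : ℝ) : 0 < phi x :=
  div_pos (Real.exp_pos _) (Real.sqrt_pos.2 (by positivity))

@[fun_prop]
lemma continuous_phi : Continuous phi := by
  unfold phi; fun_prop

lemma integrable_phi : Integrable phi := by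
  refine ((integrable_exp_neg_mul_sq (b := 1 / 2) (by norm_num)).div_const
    (Real.sqrt (2 * Real.pi))).congr (Eventually.of_forall fun x => ?_)
  simp only [phi]
  ring_nf

lemma hasDerivAt_phi (x : ℝ) : HasDerivAt phi (-x * phi x) x := by
  refine ((((hasDerivAt_pow 2 x).neg).div_const 2).exp.div_const _).congr_deriv ?_
  simp only [phi]
  norm_num
  ring

lemma tendsto_phi_atTop : Tendsto phi atTop (𝓝 0) := by
  have h : Tendsto (fun x : ℝ => -x ^ 2 / 2) atTop atBot :=
    (tendsto_neg_atTop_atBot.comp (tendsto_pow_atTop two_ne_zero)).atBot_div_const two_pos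
  have := (Real.tendsto_exp_atBot.comp h).div_const (Real.sqrt (2 * Real.pi))
  rwa [zero_div] at this

lemma Phi_neg (b : ℝ) : Phi (-b) = ∫ t in Ioi b, phi t := by
  rw [Phi, ← integral_Iic_eq_integral_Iio, ← integral_comp_neg_Ioi]
  simp [phi]

lemma abs_div_one_add_sq_le_one (x : ℝ) : |x / (1 + x ^ 2)| ≤ 1 := by
  have h : 0 < 1 + x ^ 2 := by positivity
  rw [abs_div, abs_of_pos h, div_le_one h]
  nlinarith [sq_abs x, sq_nonneg (|x| - 1)]

lemma tendsto_div_one_add_sq_mul_phi_atTop :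
    Tendsto (fun x => x / (1 + x ^ 2) * phi x) atTop (𝓝 0) := by
  refine squeeze_zero_norm (fun x => ?_) tendsto_phi_atTop
  rw [norm_mul, Real.norm_of_nonneg (phi_pos x).le]
  exact mul_le_of_le_one_left (phi_pos x).le (abs_div_one_add_sq_le_one x)

lemma hasDerivAt_div_one_add_sq_mul_phi (x : ℝ) :
    HasDerivAt (fun x => x / (1 + x ^ 2) * phi x) (2 / (1 + x ^ 2) ^ 2 * phi x - phi x) x := by
  have hden : HasDerivAt (fun x : ℝ => 1 + x ^ 2) (2 * x) x := by
    simpa using (hasDerivAt_pow 2 x).const_add 1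
  have hquot : HasDerivAt (fun x : ℝ => x / (1 + x ^ 2))
      ((1 * (1 + x ^ 2) - x * (2 * x)) / (1 + x ^ 2) ^ 2) x :=
    (hasDerivAt_id x).div hden (by positivity)
  refine (hquot.mul (hasDerivAt_phi x)).congr_deriv ?_
  field_simp
  ring

lemma integrable_div_one_add_sq_sq_mul_phi :
    Integrable fun x => 2 / (1 + x ^ 2) ^ 2 * phi x := by
  refine (integrable_phi.const_mul 2).mono' (by fun_prop (disch := intro x; positivity))
    (Eventually.of_forall fun x => ?_)
  have h : 2 / (1 + x ^ 2) ^ 2 ≤ 2 := div_le_self zero_le_two (one_le_pow₀ (by nlinarith))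
  rw [norm_mul, Real.norm_of_nonneg (by positivity), Real.norm_of_nonneg (phi_pos x).le]
  exact mul_le_mul_of_nonneg_right h (phi_pos x).le

lemma integral_Ioi_phi_eq (x : ℝ) :
    ∫ t in Ioi x, phi t =
      x / (1 + x ^ 2) * phi x + ∫ t in Ioi x, 2 / (1 + t ^ 2) ^ 2 * phi t := by
  have hD := integrable_div_one_add_sq_sq_mul_phi.integrableOn (s := Ioi x)
  have hftc := integral_Ioi_of_hasDerivAt_of_tendsto'
    (fun t _ => hasDerivAt_div_one_add_sq_mul_phi t) (hD.sub integrable_phi.integrableOn)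
    tendsto_div_one_add_sq_mul_phi_atTop
  rw [integral_sub hD integrable_phi.integrableOn] at hftc
  linarith

theorem div_one_add_sq_mul_phi_lt_integral_Ioi (x : ℝ) :
    x / (1 + x ^ 2) * phi x < ∫ t in Ioi x, phi t := by
  have hpos : 0 < ∫ t in Ioi x, 2 / (1 + t ^ 2) ^ 2 * phi t := by
    have hD_pos : ∀ t : ℝ, 0 < 2 / (1 + t ^ 2) ^ 2 * phi t := fun t => by
      have := phi_pos t; positivity
    rw [setIntegral_pos_iff_support_of_nonneg_ae (Eventually.of_forall fun t => (hD_pos t).le)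
        integrable_div_one_add_sq_sq_mul_phi.integrableOn,
      Function.support_eq_univ fun t => (hD_pos t).ne', univ_inter, Real.volume_Ioi]
    exact ENNReal.zero_lt_top
  linarith [integral_Ioi_phi_eq x]

/-- For every `b > 0`, `F(b) < 1/b`; equivalently `φ(b)/Φ(−b) < b + 1/b`. -/
theorem F_lt_inv (b : ℝ) (hb : 0 < b) :
    F b < 1 / b ∧ phi b / Phi (-b) < b + 1 / b := by
  have hgordon := div_one_add_sq_mul_phi_lt_integral_Ioi b
  rw [← Phi_neg] at hgordon
  have hPhi : 0 < Phi (-b) := lt_trans (by have := phi_pos b; positivity) hgordon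
  have hmain : phi b / Phi (-b) < b + 1 / b := by
    rw [div_lt_iff₀ hPhi]
    calc phi b = (b + 1 / b) * (b / (1 + b ^ 2) * phi b) := by field_simp; ring
      _ < (b + 1 / b) * Phi (-b) := by gcongr
  exact ⟨by rw [F]; linarith, hmain⟩
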